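/- Let a > -1 and define the Bessel heat kernel p^{(a)}(z,ζ,t) = (2t)^{-(a+1)/2} (zζ/(2t))^{(1-a)/2} I_{(a-1)/2}(zζ/(2t)) e^{-(z²+ζ²)/(4t)}. Then for every z > 0 and t > 0, ∫₀^∞ p^{(a)}(z,ζ,t) ζ^a dζ = 1. -/

import Mathlib

open MeasureTheory

/-- The modified Bessel function of the first kind,
`I_ν(x) = Σ_{m≥0} (x/2)^{2m+ν} / (m! Γ(m+ν+1))`. -/
noncomputable def besselI (ν x : ℝ) : ℝ :=
  ∑' m : ℕ, (x / 2) ^ (2 * (m : ℝ) + ν) / ((Nat.factorial m) * Real.Gamma ((m : ℝ) + ν + 1))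

/-- The Bessel heat kernel
`p^{(a)}(z,ζ,t) = (2t)^{-(a+1)/2} (zζ/(2t))^{(1-a)/2} I_{(a-1)/2}(zζ/(2t)) e^{-(z²+ζ²)/(4t)}`. -/
noncomputable def besselHeat (a z ζ t : ℝ) : ℝ :=
  (2 * t) ^ (-(a + 1)/2) * (z * ζ / (2 * t)) ^ ((1 - a)/2) *
    besselI ((a - 1)/2) (z * ζ / (2 * t)) * Real.exp (-(z^2 + ζ^2)/(4 * t))


/-! Expanding `I_ν` in its power series writes `p^{(a)}(z,ζ,t) ζ^a` as a mixture `∑ₘ πₘ fₘ(ζ)`: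
`πₘ = e^{-r} r^m / m!` are the Poisson weights of rate `r = z²/(4t)`, and `fₘ` is the density of
`√G` for a Gamma variable `G` of shape `m + (a+1)/2` and rate `1/(4t)`; the factor
`Γ(m + ν + 1)` of the Bessel coefficient is exactly the normalising constant of `fₘ`.
All terms are nonnegative, so the integral commutes with the sum and equals `∑ₘ πₘ = 1`. -/

open Real Set ProbabilityTheory
open scoped Nat

noncomputable def sqrtGammaPDF (s b ζ : ℝ) : ℝ :=
  2 * b ^ s / Gamma s * (ζ ^ (2 * s - 1) * exp (-b * ζ ^ 2))

section sqrtGammaPDF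

variable {s b : ℝ}

lemma sqrtGammaPDF_nonneg (hs : 0 < s) (hb : 0 ≤ b) {ζ : ℝ} (hζ : 0 ≤ ζ) :
    0 ≤ sqrtGammaPDF s b ζ := by
  have := Gamma_pos_of_pos hs
  unfold sqrtGammaPDF
  positivity

lemma integrableOn_sqrtGammaPDF (hs : 0 < s) (hb : 0 < b) :
    IntegrableOn (sqrtGammaPDF s b) (Ioi 0) :=
  (integrableOn_rpow_mul_exp_neg_mul_sq hb (by linarith : -1 < 2 * s - 1)).const_mul _

lemma integral_sqrtGammaPDF (hs : 0 < s) (hb : 0 < b) :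
    ∫ ζ in Ioi 0, sqrtGammaPDF s b ζ = 1 := by
  simp_rw [sqrtGammaPDF, ← rpow_two]
  rw [integral_const_mul, integral_rpow_mul_exp_neg_mul_rpow two_pos (by linarith) hb,
    show (2 * s - 1 + 1) / 2 = s by ring, show -(2 * s - 1 + 1) / 2 = -s by ring, rpow_neg hb.le]
  have := (Gamma_pos_of_pos hs).ne'
  have := (rpow_pos_of_pos hb s).ne'
  field_simp

end sqrtGammaPDF

lemma integral_tsum_mul_of_integral_eq_one {α : Type*} [MeasurableSpace α] {μ : Measure α}
    {w : ℕ → ℝ} {f : ℕ → α → ℝ} (hw : Summable fun m ↦ ‖w m‖) (hf : ∀ m, 0 ≤ᵐ[μ] f m)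
    (hf_int : ∀ m, Integrable (f m) μ) (hf_one : ∀ m, ∫ x, f m x ∂μ = 1) :
    ∫ x, ∑' m, w m * f m x ∂μ = ∑' m, w m := by
  have hnorm (m : ℕ) : ∫ x, ‖w m * f m x‖ ∂μ = ‖w m‖ := by
    simp_rw [norm_mul]
    rw [integral_const_mul, integral_congr_ae ((hf m).mono fun x hx ↦ Real.norm_of_nonneg hx),
      hf_one, mul_one]
  rw [← integral_tsum_of_summable_integral_norm (fun m ↦ (hf_int m).const_mul (w m))
    (by simpa only [hnorm] using hw)]
  simp_rw [integral_const_mul, hf_one, mul_one]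

lemma besselHeat_rpow_factor_eq (a : ℝ) {z t ζ : ℝ} (hz : 0 < z) (ht : 0 < t) (hζ : 0 < ζ)
    (m : ℕ) :
    (2 * t) ^ (-(a + 1) / 2) * (z * ζ / (2 * t)) ^ ((1 - a) / 2) *
        (z * ζ / (2 * t) / 2) ^ (2 * (m : ℝ) + (a - 1) / 2) * ζ ^ a =
      (z ^ 2 / (4 * t)) ^ m *
        (2 * (1 / (4 * t)) ^ ((m : ℝ) + (a + 1) / 2) * ζ ^ (2 * ((m : ℝ) + (a + 1) / 2) - 1)) := by
  set X := z * ζ / (2 * t)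
  have hlog2t : log (2 * t) = log 2 + log t := log_mul two_ne_zero ht.ne'
  have hlog4t : log (4 * t) = 2 * log 2 + log t := by
    rw [log_mul four_ne_zero ht.ne', show (4 : ℝ) = 2 ^ 2 by norm_num, log_pow]; push_cast; ring
  have hlogX : log X = log z + log ζ - (log 2 + log t) := by
    rw [log_div (by positivity) (by positivity), log_mul hz.ne' hζ.ne', hlog2t]
  have hlogX2 : log (X / 2) = log X - log 2 := log_div (by positivity) two_ne_zero
  have hlogr : log (z ^ 2 / (4 * t)) = 2 * log z - (2 * log 2 + log t) := by
    rw [log_div (by positivity) (by positivity), log_pow, hlog4t]; push_cast; ring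
  have hlogb : log (1 / (4 * t)) = -(2 * log 2 + log t) := by
    rw [one_div, log_inv, hlog4t]
  rw [← rpow_natCast]
  simp only [rpow_def_of_pos (show (0 : ℝ) < 2 * t by positivity),
    rpow_def_of_pos (show 0 < X by positivity), rpow_def_of_pos (show 0 < X / 2 by positivity),
    rpow_def_of_pos hζ, rpow_def_of_pos (show 0 < z ^ 2 / (4 * t) by positivity),
    rpow_def_of_pos (show 0 < 1 / (4 * t) by positivity)]
  rw [show (2 : ℝ) * exp (log (1 / (4 * t)) * (m + (a + 1) / 2)) =
      exp (log 2 + log (1 / (4 * t)) * (m + (a + 1) / 2)) by rw [exp_add, exp_log two_pos]]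
  simp only [← exp_add]
  rw [hlog2t, hlogX2, hlogX, hlogr, hlogb]
  congr 1
  ring

lemma besselHeat_mul_rpow_eq_tsum (a : ℝ) {z t ζ : ℝ} (hz : 0 < z) (ht : 0 < t) (hζ : 0 < ζ) :
    besselHeat a z ζ t * ζ ^ a = ∑' m : ℕ,
      exp (-(z ^ 2 / (4 * t))) * (z ^ 2 / (4 * t)) ^ m / m ! *
        sqrtGammaPDF (m + (a + 1) / 2) (1 / (4 * t)) ζ := by
  rw [besselHeat, besselI, ← tsum_mul_left, ← tsum_mul_right, ← tsum_mul_right]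
  refine tsum_congr fun m ↦ ?_
  have hexp : exp (-(z ^ 2 + ζ ^ 2) / (4 * t)) =
      exp (-(z ^ 2 / (4 * t))) * exp (-(1 / (4 * t)) * ζ ^ 2) := by
    rw [← exp_add]; ring_nf
  have hΓ : Gamma (m + (a - 1) / 2 + 1) = Gamma (m + (a + 1) / 2) := by ring_nf
  rw [sqrtGammaPDF, hΓ, hexp]
  linear_combination exp (-(z ^ 2 / (4 * t))) * exp (-(1 / (4 * t)) * ζ ^ 2) /
    (m ! * Gamma (m + (a + 1) / 2)) * besselHeat_rpow_factor_eq a hz ht hζ m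

/-- For `a > -1`, `z, t > 0`: `∫₀^∞ p^{(a)}(z,ζ,t) ζ^a dζ = 1`. -/
theorem besselHeat_integral_one (a : ℝ) (ha : -1 < a) (z t : ℝ) (hz : 0 < z) (ht : 0 < t) :
    ∫ ζ in Set.Ioi (0:ℝ), besselHeat a z ζ t * ζ ^ a = 1 := by
  have hs (m : ℕ) : 0 < (m : ℝ) + (a + 1) / 2 := by have := m.cast_nonneg (α := ℝ); linarith
  have hb : 0 < 1 / (4 * t) := by positivity
  have hpoisson := hasSum_one_poissonMeasure ⟨z ^ 2 / (4 * t), by positivity⟩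
  calc ∫ ζ in Ioi 0, besselHeat a z ζ t * ζ ^ a
      = ∫ ζ in Ioi 0, ∑' m : ℕ, exp (-(z ^ 2 / (4 * t))) * (z ^ 2 / (4 * t)) ^ m / m ! *
          sqrtGammaPDF (m + (a + 1) / 2) (1 / (4 * t)) ζ :=
        setIntegral_congr_fun measurableSet_Ioi fun ζ hζ ↦ besselHeat_mul_rpow_eq_tsum a hz ht hζ
    _ = ∑' m : ℕ, exp (-(z ^ 2 / (4 * t))) * (z ^ 2 / (4 * t)) ^ m / m ! :=
        integral_tsum_mul_of_integral_eq_one hpoisson.summable.norm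
          (fun m ↦ (ae_restrict_iff' measurableSet_Ioi).2 <| .of_forall fun ζ hζ ↦
            sqrtGammaPDF_nonneg (hs m) hb.le hζ.le)
          (fun m ↦ integrableOn_sqrtGammaPDF (hs m) hb)
          (fun m ↦ integral_sqrtGammaPDF (hs m) hb)
    _ = 1 := hpoisson.tsum_eq
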